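/- Let t ≥ 2 and let G be a stitched 2-ichromatic ordered graph with parts v_1, ..., v_m and v_{m+1}, ..., v_{m+n} such that v_1 v_{m+n} and v_m v_{m+1} are edges of G. Then R_t(G) ≥ (2t+1)r + 1, where r = min(m,n) - 1. -/
import Mathlib

/-- strict mono maps into Fin grow at least linearly -/
lemma fin_gap {M N : ℕ} {f : Fin M → Fin N} (hf : StrictMono f) (i j : Fin M)
    (h : (i : ℕ) ≤ (j : ℕ)) : (f i : ℕ) + ((j : ℕ) - (i : ℕ)) ≤ (f j : ℕ) := by
  obtain ⟨d, hd⟩ : ∃ d, (j : ℕ) = (i : ℕ) + d := ⟨(j : ℕ) - (i : ℕ), by omega⟩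
  clear h
  induction d generalizing j with
  | zero =>
    have hij : i = j := Fin.ext (by omega)
    subst hij; omega
  | succ d ih =>
    have hiM : (i : ℕ) + d < M := by omega
    have h1 := ih ⟨(i : ℕ) + d, hiM⟩ (by simp)
    have h2 : f ⟨(i : ℕ) + d, hiM⟩ < f j := hf (by rw [Fin.lt_def]; simp; omega)
    have h2' : ((f ⟨(i : ℕ) + d, hiM⟩ : Fin N) : ℕ) < (f j : ℕ) := h2
    simp only [Fin.val_mk] at h1
    omega

/-- greedy chain lemma -/
lemma exists_chain {t : ℕ} (ht : 1 ≤ t) (L : ℕ) :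
    ∀ (N : ℕ) (c : Fin N → Fin N → Fin t) (s : Finset (Fin N)), (t+1)^L ≤ s.card →
    ∃ g : Fin L → Fin N, StrictMono g ∧ (∀ i, g i ∈ s) ∧
      ∃ k : Fin L → Fin t, ∀ i j : Fin L, i < j → c (g i) (g j) = k i := by
  induction L with
  | zero =>
    intro N c s _
    exact ⟨Fin.elim0, fun a => a.elim0, fun i => i.elim0,
      Fin.elim0, fun i => i.elim0⟩
  | succ L ih =>
    intro N c s hs
    have hpow : 1 ≤ (t+1)^(L+1) := Nat.one_le_pow _ _ (by omega)
    have hsne : s.Nonempty := Finset.card_pos.mp (by omega)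
    set v0 := s.min' hsne with hv0
    have hv0mem : v0 ∈ s := s.min'_mem hsne
    set s' := s.erase v0 with hs'def
    have hs' : (t+1)^(L+1) - 1 ≤ s'.card := by
      rw [hs'def, Finset.card_erase_of_mem hv0mem]; omega
    have hpig : ∃ k0 ∈ (Finset.univ : Finset (Fin t)),
        (t+1)^L - 1 < (s'.filter fun v => c v0 v = k0).card := by
      apply Finset.exists_lt_card_fiber_of_mul_lt_card_of_maps_to
        (fun a _ => Finset.mem_univ _)
      have hX : 1 ≤ (t+1)^L := Nat.one_le_pow _ _ (by omega)
      obtain ⟨X, hXe⟩ : ∃ X, (t+1)^L = X + 1 := ⟨(t+1)^L - 1, by omega⟩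
      have he : (t+1)^(L+1) = X*t + X + t + 1 := by
        rw [pow_succ, hXe]; ring
      have hcard : (Finset.univ : Finset (Fin t)).card = t := by simp
      rw [hcard, hXe]
      have h1 : t * (X + 1 - 1) = X * t := by rw [Nat.add_sub_cancel, mul_comm]
      rw [h1]
      have h2 : X * t < X*t + X + t + 1 - 1 := by
        have h3 : X*t + X + t + 1 - 1 = X*t + (X + t) := by omega
        rw [h3]
        exact Nat.lt_add_of_pos_right (by omega)
      omega
    obtain ⟨k0, _, hk0⟩ := hpig
    set s'' := s'.filter (fun v => c v0 v = k0) with hs''def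
    have hs'' : (t+1)^L ≤ s''.card := by omega
    obtain ⟨g', hg'mono, hg'mem, k', hk'⟩ := ih N c s'' hs''
    have hglt : ∀ j, v0 < g' j := by
      intro j
      have hmem := hg'mem j
      rw [hs''def, Finset.mem_filter, hs'def, Finset.mem_erase] at hmem
      exact lt_of_le_of_ne (s.min'_le _ hmem.1.2) (Ne.symm hmem.1.1)
    refine ⟨Fin.cases v0 g', ?_, ?_, Fin.cases k0 k', ?_⟩
    · intro x y hxy
      rcases Fin.eq_zero_or_eq_succ x with hx | ⟨x', rfl⟩ <;>
        rcases Fin.eq_zero_or_eq_succ y with hy | ⟨y', rfl⟩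
      · subst hx; subst hy; exact absurd hxy (lt_irrefl _)
      · subst hx; simpa using hglt y'
      · subst hy; exact absurd hxy (by simp [Fin.lt_def])
      · simp only [Fin.cases_succ]
        exact hg'mono (Fin.succ_lt_succ_iff.mp hxy)
    · intro i
      rcases Fin.eq_zero_or_eq_succ i with hi | ⟨i', rfl⟩
      · subst hi; simpa using hv0mem
      · simp only [Fin.cases_succ]
        have hmem := hg'mem i'
        rw [hs''def, Finset.mem_filter, hs'def, Finset.mem_erase] at hmem
        exact hmem.1.2
    · intro i j hij
      rcases Fin.eq_zero_or_eq_succ i with hi | ⟨i', rfl⟩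
      · subst hi
        rcases Fin.eq_zero_or_eq_succ j with hj | ⟨j', rfl⟩
        · subst hj; exact absurd hij (lt_irrefl _)
        · simp only [Fin.cases_zero, Fin.cases_succ]
          have hmem := hg'mem j'
          rw [hs''def, Finset.mem_filter] at hmem
          exact hmem.2
      · rcases Fin.eq_zero_or_eq_succ j with hj | ⟨j', rfl⟩
        · subst hj; exact absurd hij (by simp [Fin.lt_def])
        · simp only [Fin.cases_succ]
          exact hk' i' j' (Fin.succ_lt_succ_iff.mp hij)



/-- A `t`-edge-coloring `c` of the complete graph on the ordered vertex set `Fin N`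
contains a monochromatic ordered copy of the ordered graph `G` on `Fin M`. -/
def HasMonoCopy {M N t : ℕ} (G : SimpleGraph (Fin M)) (c : Fin N → Fin N → Fin t) : Prop :=
  ∃ k : Fin t, ∃ f : Fin M → Fin N, StrictMono f ∧
    ∀ u v : Fin M, u < v → G.Adj u v → c (f u) (f v) = k

/-- The `t`-color ordered Ramsey number of the ordered graph `G`: the least `N` such that
every `t`-coloring of the edges of the complete graph on `Fin N` contains a monochromatic
ordered copy of `G`. -/
noncomputable def orderedRamsey {M : ℕ} (t : ℕ) (G : SimpleGraph (Fin M)) : ℕ :=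
  sInf {N : ℕ | ∀ c : Fin N → Fin N → Fin t, HasMonoCopy G c}

/-- An interval coloring of an ordered graph with `k` parts, encoded as a monotone
surjection onto `Fin k` whose fibers (the parts, which are intervals of consecutive
vertices) are independent sets. -/
def IsIntervalColoring {N k : ℕ} (G : SimpleGraph (Fin N)) (p : Fin N → Fin k) : Prop :=
  Monotone p ∧ Function.Surjective p ∧ ∀ u v : Fin N, G.Adj u v → p u ≠ p v

/-- The interval chromatic number of an ordered graph. -/
noncomputable def intervalChromatic {N : ℕ} (G : SimpleGraph (Fin N)) : ℕ :=
  sInf {k : ℕ | ∃ p : Fin N → Fin k, IsIntervalColoring G p}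

/-- ordered Ramsey exists: huge N forces a mono copy -/
lemma exists_mono {t M : ℕ} (ht : 1 ≤ t) (G : SimpleGraph (Fin M)) :
    ∀ c : Fin ((t+1)^(t*M+1)) → Fin ((t+1)^(t*M+1)) → Fin t, HasMonoCopy G c := by
  intro c
  obtain ⟨g, hmono, hmem, k, hk⟩ := exists_chain ht (t*M+1) _ c Finset.univ (by simp)
  obtain ⟨k0, _, hfib⟩ : ∃ k0 ∈ (Finset.univ : Finset (Fin t)),
      M - 1 < (Finset.univ.filter fun i : Fin (t*M+1) => k i = k0).card := by
    apply Finset.exists_lt_card_fiber_of_mul_lt_card_of_maps_to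
      (fun a _ => Finset.mem_univ _)
    have h1 : (Finset.univ : Finset (Fin t)).card = t := by simp
    have h2 : (Finset.univ : Finset (Fin (t*M+1))).card = t*M+1 := by simp
    rw [h1, h2]
    have e : M = (M-1)+1 ∨ M = 0 := by omega
    rcases e with e | e
    · have h3 : t * M = t * (M-1) + t := by
        conv_lhs => rw [e]
        rw [Nat.mul_succ]
      rw [h3]
      omega
    · rw [e]; simp
  have hM' : M ≤ (Finset.univ.filter fun i : Fin (t*M+1) => k i = k0).card := by omega
  obtain ⟨T, hTsub, hTcard⟩ := Finset.exists_subset_card_eq hM'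
  refine ⟨k0, fun i => g (T.orderEmbOfFin hTcard i),
    hmono.comp (T.orderEmbOfFin hTcard).strictMono, ?_⟩
  intro u v huv _
  have h1 : T.orderEmbOfFin hTcard u < T.orderEmbOfFin hTcard v :=
    (T.orderEmbOfFin hTcard).strictMono huv
  rw [hk _ _ h1]
  have hmemT := Finset.orderEmbOfFin_mem T hTcard u
  have hmemF := hTsub hmemT
  rw [Finset.mem_filter] at hmemF
  exact hmemF.2

/-- the block coloring pattern -/
def pival (t i j : ℕ) : ℕ :=
  if 2 ≤ j - i ∧ j - i ≤ 2*t - 1 then (j - i)/2 - 1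
  else if j - i = 2*t then t - 1
  else if 1 ≤ i ∧ j ≤ 2*t - 1 then t - 1
  else 0

lemma pival_lt {t : ℕ} (ht : 1 ≤ t) (i j : ℕ) : pival t i j < t := by
  unfold pival; split_ifs <;> omega

lemma pival_caseA {t A B B' C kv : ℕ} (ht : 2 ≤ t) (h1 : A + 1 ≤ B) (h2 : B ≤ B')
    (h3 : B' + 1 ≤ C) (h4 : C ≤ 2*t) (h5 : C - A ≤ 2*t - 1)
    (e14 : pival t A C = kv) (e23 : pival t B B' = kv) : False := by
  unfold pival at e14 e23; split_ifs at e14 e23 <;> omega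

lemma pival_extremes {t A C : ℕ} (ht : 1 ≤ t) (hAC : A + 2 ≤ C) (hC : C ≤ 2*t)
    (h : ¬(C - A ≤ 2*t - 1)) : A = 0 ∧ C = 2*t := by omega

lemma pival_eval00 {t : ℕ} (ht : 1 ≤ t) : pival t 0 (2*t) = t - 1 := by
  unfold pival; split_ifs <;> omega

lemma pival_fwd {t Y : ℕ} (ht : 2 ≤ t) (hY : Y ≤ 2*t) (h : pival t 0 Y = t - 1) :
    Y = 2*t := by
  unfold pival at h; split_ifs at h <;> omega

lemma pival_bwd {t Z : ℕ} (ht : 2 ≤ t) (hZ : Z ≤ 2*t) (h : pival t Z (2*t) = t - 1) :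
    Z = 0 := by
  unfold pival at h; split_ifs at h <;> omega

set_option maxHeartbeats 1600000 in
/-- For `t ≥ 2`, if `G` is a stitched 2-ichromatic ordered graph with parts
`v_1,…,v_m` and `v_{m+1},…,v_{m+n}` having edges `v_1 v_{m+n}` and `v_m v_{m+1}`,
then `R_t(G) ≥ (2t+1)r + 1` where `r = min(m,n) - 1`. -/
theorem stmt10 {m n t : ℕ} (ht : 2 ≤ t) (hm : 1 ≤ m) (hn : 1 ≤ n)
    (G : SimpleGraph (Fin (m + n)))
    (hichrom : intervalChromatic G = 2)
    (hpart1 : ∀ u v : Fin (m + n), (u : ℕ) < m → (v : ℕ) < m → ¬ G.Adj u v)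
    (hpart2 : ∀ u v : Fin (m + n), m ≤ (u : ℕ) → m ≤ (v : ℕ) → ¬ G.Adj u v)
    (hstitched : G.Reachable ⟨0, by omega⟩ ⟨m - 1, by omega⟩ ∧
      G.Reachable ⟨0, by omega⟩ ⟨m, by omega⟩ ∧
      G.Reachable ⟨0, by omega⟩ ⟨m + n - 1, by omega⟩)
    (hedge1 : G.Adj ⟨0, by omega⟩ ⟨m + n - 1, by omega⟩)
    (hedge2 : G.Adj ⟨m - 1, by omega⟩ ⟨m, by omega⟩) :
    (2 * t + 1) * (min m n - 1) + 1 ≤ orderedRamsey t G := by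
  have hne : {N : ℕ | ∀ c : Fin N → Fin N → Fin t, HasMonoCopy G c}.Nonempty :=
    ⟨(t+1)^(t*(m+n)+1), fun c => exists_mono (by omega) G c⟩
  show _ ≤ sInf _
  refine le_csInf hne ?_
  intro N hN
  simp only [Set.mem_setOf_eq] at hN
  by_contra hcon
  push_neg at hcon
  have hminm := Nat.min_le_left m n
  have hminn := Nat.min_le_right m n
  obtain ⟨R, hRdef⟩ : ∃ R, min m n - 1 = R := ⟨_, rfl⟩
  simp only [hRdef] at hcon
  have hRm : R ≤ m - 1 := by omega
  have hRn : R ≤ n - 1 := by omega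
  obtain ⟨k, f, hf, hcol⟩ := hN (fun u v =>
    ⟨pival t (min u.val v.val / R) (max u.val v.val / R), pival_lt (by omega) _ _⟩)
  obtain ⟨v1, vm, vm1, vl, e1, e2, e3, e4, hedge1', hedge2', hreach'⟩ :
      ∃ (a b c d : Fin (m+n)), (a : ℕ) = 0 ∧ (b : ℕ) = m - 1 ∧ (c : ℕ) = m ∧
        (d : ℕ) = m + n - 1 ∧ G.Adj a d ∧ G.Adj b c ∧ G.Reachable a b :=
    ⟨⟨0, by omega⟩, ⟨m-1, by omega⟩, ⟨m, by omega⟩, ⟨m+n-1, by omega⟩,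
      rfl, rfl, rfl, rfl, hedge1, hedge2, hstitched.1⟩
  by_cases hR0 : R = 0
  · rw [hR0] at hcon
    simp only [Nat.mul_zero, Nat.zero_add] at hcon
    have hN0 : N = 0 := by omega
    have := (f v1).isLt
    omega
  · have hR : 1 ≤ R := by omega
    have hNle : N ≤ (2*t+1)*R := by omega
    -- positions
    have h12 := fin_gap hf v1 vm (by omega)
    have h34 := fin_gap hf vm1 vl (by omega)
    have h23 : (f vm : ℕ) < (f vm1 : ℕ) := hf (show vm < vm1 by rw [Fin.lt_def]; omega)
    have h14 : (f v1 : ℕ) < (f vl : ℕ) := by omega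
    have h4N : (f vl : ℕ) < (2*t+1)*R := lt_of_lt_of_le (f vl).isLt hNle
    -- blocks
    have hblkle : ∀ w : Fin (m+n), (f w : ℕ)/R ≤ 2*t := by
      intro w
      have hw : (f w : ℕ) < (2*t+1)*R := lt_of_lt_of_le (f w).isLt hNle
      have := (Nat.div_lt_iff_lt_mul hR).mpr hw
      omega
    have hba : (f v1 : ℕ)/R + 1 ≤ (f vm : ℕ)/R := by
      have h' : (f v1 : ℕ) + R ≤ (f vm : ℕ) := by omega
      calc (f v1 : ℕ)/R + 1 = ((f v1 : ℕ) + R)/R := (Nat.add_div_right _ hR).symm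
        _ ≤ (f vm : ℕ)/R := Nat.div_le_div_right h'
    have hbb' : (f vm : ℕ)/R ≤ (f vm1 : ℕ)/R := Nat.div_le_div_right (by omega)
    have hb'c : (f vm1 : ℕ)/R + 1 ≤ (f vl : ℕ)/R := by
      have h' : (f vm1 : ℕ) + R ≤ (f vl : ℕ) := by omega
      calc (f vm1 : ℕ)/R + 1 = ((f vm1 : ℕ) + R)/R := (Nat.add_div_right _ hR).symm
        _ ≤ (f vl : ℕ)/R := Nat.div_le_div_right h'
    -- colors of the two special edges
    have hv1lt : v1 < vl := by rw [Fin.lt_def]; omega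
    have hvmlt : vm < vm1 := by rw [Fin.lt_def]; omega
    have hval14 : pival t (min (f v1 : ℕ) (f vl : ℕ) / R) (max (f v1 : ℕ) (f vl : ℕ) / R)
        = (k : ℕ) := congrArg Fin.val (hcol v1 vl hv1lt hedge1')
    have hval23 : pival t (min (f vm : ℕ) (f vm1 : ℕ) / R) (max (f vm : ℕ) (f vm1 : ℕ) / R)
        = (k : ℕ) := congrArg Fin.val (hcol vm vm1 hvmlt hedge2')
    rw [Nat.min_eq_left (le_of_lt h14), Nat.max_eq_right (le_of_lt h14)] at hval14
    rw [Nat.min_eq_left (le_of_lt h23), Nat.max_eq_right (le_of_lt h23)] at hval23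
    have hblk4 := hblkle vl
    by_cases hcase : (f vl : ℕ)/R - (f v1 : ℕ)/R ≤ 2*t - 1
    · -- case A : both special edges in a short distance class
      exact pival_caseA ht hba hbb' hb'c hblk4 hcase hval14 hval23
    · -- case B : extreme blocks
      have hAC : (f v1 : ℕ)/R + 2 ≤ (f vl : ℕ)/R :=
        calc (f v1 : ℕ)/R + 2 = ((f v1 : ℕ)/R + 1) + 1 := rfl
          _ ≤ (f vm : ℕ)/R + 1 := Nat.succ_le_succ hba
          _ ≤ (f vm1 : ℕ)/R + 1 := Nat.succ_le_succ hbb'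
          _ ≤ (f vl : ℕ)/R := hb'c
      obtain ⟨hX0, hW⟩ := pival_extremes (by omega) hAC hblk4 hcase
      have hkval : (k : ℕ) = t - 1 := by
        rw [hX0, hW, pival_eval00 (by omega : 1 ≤ t)] at hval14
        exact hval14.symm
      have closure : ∀ x y : Fin (m+n), G.Adj x y →
          (((x : ℕ) < m → (f x : ℕ)/R = 0) ∧ (m ≤ (x : ℕ) → (f x : ℕ)/R = 2*t)) →
          (((y : ℕ) < m → (f y : ℕ)/R = 0) ∧ (m ≤ (y : ℕ) → (f y : ℕ)/R = 2*t)) := by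
        intro x y hadj hx
        rcases Nat.lt_or_ge (x : ℕ) m with hxm | hxm <;>
          rcases Nat.lt_or_ge (y : ℕ) m with hym | hym
        · exact absurd hadj (hpart1 x y hxm hym)
        · refine ⟨fun h => by omega, fun _ => ?_⟩
          have hxy : x < y := by rw [Fin.lt_def]; omega
          have hflt : (f x : ℕ) < (f y : ℕ) := hf hxy
          have hv : pival t (min (f x : ℕ) (f y : ℕ) / R) (max (f x : ℕ) (f y : ℕ) / R)
              = (k : ℕ) := congrArg Fin.val (hcol x y hxy hadj)
          rw [Nat.min_eq_left (le_of_lt hflt), Nat.max_eq_right (le_of_lt hflt),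
            hx.1 hxm, hkval] at hv
          have hyle := hblkle y
          exact pival_fwd ht hyle hv
        · refine ⟨fun _ => ?_, fun h => by omega⟩
          have hyx : y < x := by rw [Fin.lt_def]; omega
          have hflt : (f y : ℕ) < (f x : ℕ) := hf hyx
          have hv : pival t (min (f y : ℕ) (f x : ℕ) / R) (max (f y : ℕ) (f x : ℕ) / R)
              = (k : ℕ) := congrArg Fin.val (hcol y x hyx hadj.symm)
          rw [Nat.min_eq_left (le_of_lt hflt), Nat.max_eq_right (le_of_lt hflt),
            hx.2 hxm, hkval] at hv
          have hyle := hblkle y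
          exact pival_bwd ht hyle hv
        · exact absurd hadj (hpart2 x y hxm hym)
      have walkP : ∀ (u w : Fin (m+n)), G.Walk u w →
          (((u : ℕ) < m → (f u : ℕ)/R = 0) ∧ (m ≤ (u : ℕ) → (f u : ℕ)/R = 2*t)) →
          (((w : ℕ) < m → (f w : ℕ)/R = 0) ∧ (m ≤ (w : ℕ) → (f w : ℕ)/R = 2*t)) := by
        intro u w p
        induction p with
        | nil => exact id
        | cons h p ih => exact fun hu => ih (closure _ _ h hu)
      obtain ⟨p⟩ := hreach'
      have hPm := walkP v1 vm p ⟨fun _ => hX0, fun hh => absurd hh (by omega)⟩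
      have hvmblk : (f vm : ℕ)/R = 0 := hPm.1 (by omega)
      omega
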